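/- Let λ₁, λ₂, λ₃ be pairwise distinct real numbers, U ⊆ ℝ³ open, and f : ℝ³ → ℝ of class C² on U satisfying the dispersionless Hirota equation (λ₂−λ₃)∂₁f·∂₂∂₃f + (λ₃−λ₁)∂₂f·∂₃∂₁f + (λ₁−λ₂)∂₃f·∂₁∂₂f = 0 at every point of U. For each λ ∈ ℝ define G^λ : U → ℝ³ by G^λ := ((λ₂−λ)(λ₃−λ)∂₁f, (λ₃−λ)(λ₁−λ)∂₂f, (λ₁−λ)(λ₂−λ)∂₃f). Then for every λ ∈ ℝ and every point p ∈ U: ⟨G^λ(p), (curl G^λ)(p)⟩ = 0; that is, each of the 1-forms α^λ = (λ₂−λ)(λ₃−λ)f_{x₁}dx₁ + (λ₃−λ)(λ₁−λ)f_{x₂}dx₂ + (λ₁−λ)(λ₂−λ)f_{x₃}dx₃ satisfies the integrability condition dα^λ ∧ α^λ = 0 on U. -/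

import Mathlib

/-- Partial derivative `∂ᵢf` of `f : ℝ³ → ℝ` at `p`. -/
noncomputable def pd (i : Fin 3) (f : (Fin 3 → ℝ) → ℝ) (p : Fin 3 → ℝ) : ℝ :=
  fderiv ℝ f p (Pi.single i 1)

/-- Second partial derivative `∂ᵢ∂ⱼf`. -/
noncomputable def pd2 (i j : Fin 3) (f : (Fin 3 → ℝ) → ℝ) (p : Fin 3 → ℝ) : ℝ :=
  pd i (pd j f) p

/-- `curl` of a vector field on `ℝ³` given by its three component functions. -/
noncomputable def curl (v : Fin 3 → (Fin 3 → ℝ) → ℝ) (p : Fin 3 → ℝ) :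
    Fin 3 → ℝ :=
  ![pd 1 (v 2) p - pd 2 (v 1) p,
    pd 2 (v 0) p - pd 0 (v 2) p,
    pd 0 (v 1) p - pd 1 (v 0) p]

/-- The coefficient vector field of the 1-form
`α^λ = (λ₂−λ)(λ₃−λ)f_{x₁}dx₁ + (λ₃−λ)(λ₁−λ)f_{x₂}dx₂ + (λ₁−λ)(λ₂−λ)f_{x₃}dx₃`. -/
noncomputable def Gvec (l1 l2 l3 lam : ℝ) (f : (Fin 3 → ℝ) → ℝ) :
    Fin 3 → (Fin 3 → ℝ) → ℝ :=
  ![fun p => (l2 - lam) * (l3 - lam) * pd 0 f p,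
    fun p => (l3 - lam) * (l1 - lam) * pd 1 f p,
    fun p => (l1 - lam) * (l2 - lam) * pd 2 f p]

lemma pd2_eq (f : (Fin 3 → ℝ) → ℝ) (p : Fin 3 → ℝ) (hf : ContDiffAt ℝ 2 f p) (i j : Fin 3) :
    pd2 i j f p = fderiv ℝ (fderiv ℝ f) p (Pi.single i 1) (Pi.single j 1) := by
  have hd : DifferentiableAt ℝ (fderiv ℝ f) p :=
    (hf.fderiv_right (m := 1) le_rfl).differentiableAt one_ne_zero
  unfold pd2 pd
  rw [fderiv_clm_apply hd (differentiableAt_const _)]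
  simp

lemma pd2_symm (f : (Fin 3 → ℝ) → ℝ) (p : Fin 3 → ℝ) (hf : ContDiffAt ℝ 2 f p) (i j : Fin 3) :
    pd2 i j f p = pd2 j i f p := by
  rw [pd2_eq f p hf, pd2_eq f p hf]
  exact (hf.isSymmSndFDerivAt (by simp)) _ _

lemma pd_const_mul (g : (Fin 3 → ℝ) → ℝ) (p : Fin 3 → ℝ) (c : ℝ) (i : Fin 3)
    (hg : DifferentiableAt ℝ g p) :
    pd i (fun q => c * g q) p = c * pd i g p := by
  unfold pd
  rw [fderiv_const_mul hg]
  simp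

/-- If `f` is `C²` on an open set `U ⊆ ℝ³` and satisfies the dispersionless Hirota
equation on `U` (with pairwise distinct `λ₁, λ₂, λ₃`), then for every `λ ∈ ℝ` the
1-form `α^λ` satisfies the Frobenius integrability condition `dα^λ ∧ α^λ = 0` on
`U`, i.e. `⟨G^λ, curl G^λ⟩ = 0` at every point of `U`. -/
theorem veronese_integrability_of_hirota (l1 l2 l3 : ℝ)
    (h12 : l1 ≠ l2) (h13 : l1 ≠ l3) (h23 : l2 ≠ l3)
    (U : Set (Fin 3 → ℝ)) (hU : IsOpen U)
    (f : (Fin 3 → ℝ) → ℝ) (hf : ContDiffOn ℝ 2 f U)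
    (hHirota : ∀ p ∈ U,
      (l2 - l3) * pd 0 f p * pd2 1 2 f p
        + (l3 - l1) * pd 1 f p * pd2 2 0 f p
        + (l1 - l2) * pd 2 f p * pd2 0 1 f p = 0) :
    ∀ (lam : ℝ), ∀ p ∈ U,
      ∑ i : Fin 3, Gvec l1 l2 l3 lam f i p * curl (Gvec l1 l2 l3 lam f) p i = 0 := by
  intro lam p hp
  have hfp : ContDiffAt ℝ 2 f p := hf.contDiffAt (hU.mem_nhds hp)
  have hd : DifferentiableAt ℝ (fderiv ℝ f) p :=
    (hfp.fderiv_right (m := 1) le_rfl).differentiableAt one_ne_zero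
  have hpd : ∀ j : Fin 3, DifferentiableAt ℝ (pd j f) p := fun j =>
    hd.clm_apply (differentiableAt_const _)
  simp only [Fin.sum_univ_three, Gvec, curl, Matrix.cons_val_zero, Matrix.cons_val_one,
    Matrix.head_cons, Matrix.cons_val_two, Matrix.tail_cons]
  rw [pd_const_mul _ _ _ _ (hpd 2), pd_const_mul _ _ _ _ (hpd 1),
    pd_const_mul _ _ _ _ (hpd 0), pd_const_mul _ _ _ _ (hpd 2),
    pd_const_mul _ _ _ _ (hpd 1), pd_const_mul _ _ _ _ (hpd 0)]
  have e21 : pd 2 (pd 1 f) p = pd2 1 2 f p := pd2_symm f p hfp 2 1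
  have e02 : pd 0 (pd 2 f) p = pd2 2 0 f p := pd2_symm f p hfp 0 2
  have e10 : pd 1 (pd 0 f) p = pd2 0 1 f p := pd2_symm f p hfp 1 0
  have e12 : pd 1 (pd 2 f) p = pd2 1 2 f p := rfl
  have e20 : pd 2 (pd 0 f) p = pd2 2 0 f p := rfl
  have e01 : pd 0 (pd 1 f) p = pd2 0 1 f p := rfl
  rw [e21, e02, e10, e12, e20, e01]
  linear_combination ((l1 - lam) * (l2 - lam) * (l3 - lam)) * hHirota p hp
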